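/- Let B₁ and B₂ be simple skew left braces and α : (B₂,∘) → Aut(B₁,+,∘) a non-trivial group homomorphism. Suppose moreover that for every a ∈ B₂ with a ≠ 0, the map α_a is not an inner automorphism of the group (B₁,∘) (i.e. α_a ≠ i_g for every g ∈ B₁, where i_g(h) := g⁻ ∘ h ∘ g). Then the only ideals of B₁ ⋊_α B₂ are {(0,0)}, B₁ × {0}, and B₁ ⋊_α B₂. -/

import Mathlib

/-- A *skew left brace* is a set with two group structures `(B,+)` and `(B,∘)`
(the latter written multiplicatively) satisfying `a∘(b+c) = a∘b - a + a∘c`.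
The two identity elements automatically coincide. -/
class SkewLeftBrace (B : Type*) extends AddGroup B, Group B where
  mul_add_eq : ∀ a b c : B, a * (b + c) = a * b - a + a * c

namespace SkewLeftBrace

variable {B : Type*} [SkewLeftBrace B]

/-- The map `λ_a : b ↦ -a + a∘b`. -/
def lmap (a b : B) : B := -a + a * b

/-- The brace star operation `a*b := -a + a∘b - b`. -/
def bstar (a b : B) : B := -a + a * b - b

/-- `X*Y`: the additive subgroup generated by all `bstar x y`, `x ∈ X`, `y ∈ Y`,
regarded as a set. -/
def setStar (X Y : Set B) : Set B :=
  ↑(AddSubgroup.closure {z : B | ∃ x ∈ X, ∃ y ∈ Y, z = bstar x y})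

/-- Pointwise sum of two subsets. -/
def setSum (X Y : Set B) : Set B := {w : B | ∃ x ∈ X, ∃ y ∈ Y, w = x + y}

/-- `X^Z := {z + x - z : x ∈ X, z ∈ Z}`. -/
def setConj (X Z : Set B) : Set B := {w : B | ∃ x ∈ X, ∃ z ∈ Z, w = z + x + -z}

/-- An ideal of a skew left brace: a subgroup of `(B,+)` which is normal in both
`(B,+)` and `(B,∘)` and invariant under all the maps `λ_a`. -/
structure IsIdeal (I : Set B) : Prop where
  zero_mem : (0 : B) ∈ I
  add_mem : ∀ ⦃x y : B⦄, x ∈ I → y ∈ I → x + y ∈ I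
  neg_mem : ∀ ⦃x : B⦄, x ∈ I → -x ∈ I
  add_conj_mem : ∀ (b : B) ⦃x : B⦄, x ∈ I → b + x + -b ∈ I
  mul_mem : ∀ ⦃x y : B⦄, x ∈ I → y ∈ I → x * y ∈ I
  inv_mem : ∀ ⦃x : B⦄, x ∈ I → x⁻¹ ∈ I
  mul_conj_mem : ∀ (b : B) ⦃x : B⦄, x ∈ I → b * x * b⁻¹ ∈ I
  lmap_mem : ∀ (a : B) ⦃x : B⦄, x ∈ I → lmap a x ∈ I

/-- A minimal ideal: a nonzero ideal whose only sub-ideals are `{0}` and itself. -/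
def IsMinimalIdeal (I : Set B) : Prop :=
  IsIdeal I ∧ I ≠ {0} ∧ ∀ J : Set B, IsIdeal J → J ⊆ I → J = {0} ∨ J = I

theorem mul_zero' (a : B) : a * (0 : B) = a := by
  have h := SkewLeftBrace.mul_add_eq a (0 : B) (0 : B)
  rw [add_zero] at h
  have h2 : a * (0:B) - a = 0 := (right_eq_add.mp h)
  exact sub_eq_zero.mp h2

theorem zero_eq_one : (0 : B) = 1 := by
  have h := mul_zero' (1 : B)
  rw [one_mul] at h
  exact h

theorem IsIdeal.one_mem {I : Set B} (h : IsIdeal I) : (1 : B) ∈ I :=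
  (zero_eq_one (B := B)) ▸ h.zero_mem

variable (B) in
/-- A skew left brace is *semiprime* if `I*I ≠ {0}` for every nonzero ideal `I`. -/
def Semiprime : Prop := ∀ I : Set B, IsIdeal I → I ≠ {0} → setStar I I ≠ {0}

variable (B) in
/-- A skew left brace is *prime*... (and) *simple* if its only ideals are `{0}` and `B`,
and these are distinct. -/
def Simple : Prop :=
  ({0} : Set B) ≠ Set.univ ∧ ∀ I : Set B, IsIdeal I → I = {0} ∨ I = Set.univ

variable (B) in
/-- A skew left brace is *Artinian* if every descending chain of ideals stabilizes. -/
def Artinian : Prop :=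
  ∀ f : ℕ → Set B, (∀ n, IsIdeal (f n)) → (∀ n, f (n + 1) ⊆ f n) →
    ∃ N, ∀ n, N ≤ n → f n = f N

/-- The `*`-products of copies of a fixed set `I`. -/
inductive IsStarPowerOf (I : Set B) : Set B → Prop
  | base : IsStarPowerOf I I
  | star {X Y : Set B} : IsStarPowerOf I X → IsStarPowerOf I Y →
      IsStarPowerOf I (setStar X Y)

variable (B) in
/-- A skew left brace is *strongly semiprime* if for every nonzero ideal `I`, every
`*`-product of copies of `I` is nonzero. -/
def StronglySemiprime : Prop :=
  ∀ I : Set B, IsIdeal I → I ≠ {0} → ∀ X : Set B, IsStarPowerOf I X → X ≠ {0}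

/-- The `*`-products of nonzero ideals. -/
inductive IsStarProdOfNonzeroIdeals : Set B → Prop
  | ideal {I : Set B} : IsIdeal I → I ≠ {0} → IsStarProdOfNonzeroIdeals I
  | star {X Y : Set B} : IsStarProdOfNonzeroIdeals X → IsStarProdOfNonzeroIdeals Y →
      IsStarProdOfNonzeroIdeals (setStar X Y)

variable (B) in
/-- A skew left brace is *strongly prime* if every `*`-product of nonzero ideals is nonzero. -/
def StronglyPrime : Prop :=
  ∀ X : Set B, IsStarProdOfNonzeroIdeals X → X ≠ {0}

end SkewLeftBrace
namespace SkewLeftBrace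

variable {B : Type*} [SkewLeftBrace B]

/-- An ideal, regarded as a skew left brace with the restricted operations. -/
def IsIdeal.brace {I : Set B} (h : IsIdeal I) : SkewLeftBrace I :=
  letI : Zero I := ⟨⟨0, h.zero_mem⟩⟩
  letI : Add I := ⟨fun x y => ⟨x.1 + y.1, h.add_mem x.2 y.2⟩⟩
  letI : Neg I := ⟨fun x => ⟨-x.1, h.neg_mem x.2⟩⟩
  letI : One I := ⟨⟨1, h.one_mem⟩⟩
  letI : Mul I := ⟨fun x y => ⟨x.1 * y.1, h.mul_mem x.2 y.2⟩⟩
  letI : Inv I := ⟨fun x => ⟨x.1⁻¹, h.inv_mem x.2⟩⟩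
  { add := (· + ·)
    zero := 0
    neg := (- ·)
    nsmul := nsmulRec
    zsmul := zsmulRec
    add_assoc := fun a b c => Subtype.ext (add_assoc a.1 b.1 c.1)
    zero_add := fun a => Subtype.ext (zero_add a.1)
    add_zero := fun a => Subtype.ext (add_zero a.1)
    neg_add_cancel := fun a => Subtype.ext (neg_add_cancel a.1)
    mul := (· * ·)
    one := 1
    inv := (·⁻¹)
    npow := npowRec
    zpow := zpowRec
    mul_assoc := fun a b c => Subtype.ext (mul_assoc a.1 b.1 c.1)
    one_mul := fun a => Subtype.ext (one_mul a.1)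
    mul_one := fun a => Subtype.ext (mul_one a.1)
    inv_mul_cancel := fun a => Subtype.ext (inv_mul_cancel a.1)
    mul_add_eq := fun a b c =>
      Subtype.ext (by
        show a.1 * (b.1 + c.1) = a.1 * b.1 + -a.1 + a.1 * c.1
        rw [SkewLeftBrace.mul_add_eq, sub_eq_add_neg]) }

/-- The direct product of two skew left braces, with componentwise operations. -/
def prodBrace (B₁ B₂ : Type*) [SkewLeftBrace B₁] [SkewLeftBrace B₂] :
    SkewLeftBrace (B₁ × B₂) :=
  { (inferInstance : AddGroup (B₁ × B₂)), (inferInstance : Group (B₁ × B₂)) with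
    mul_add_eq := fun a b c =>
      Prod.ext (by simp [SkewLeftBrace.mul_add_eq]) (by simp [SkewLeftBrace.mul_add_eq]) }

/-- Two skew left braces are isomorphic if there is a bijection preserving `+` and `∘`. -/
def IsBraceIsomorphic (A C : Type*) [SkewLeftBrace A] [SkewLeftBrace C] : Prop :=
  ∃ f : A ≃ C, (∀ x y : A, f (x + y) = f x + f y) ∧ (∀ x y : A, f (x * y) = f x * f y)

/-- A group homomorphism from `(B₂,∘)` to the automorphism group `Aut(B₁,+,∘)` of the
skew left brace `B₁`, presented as an action `act : B₂ → B₁ → B₁` by skew left brace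
automorphisms. -/
structure BraceActionHom (B₂ B₁ : Type*) [SkewLeftBrace B₂] [SkewLeftBrace B₁] where
  act : B₂ → B₁ → B₁
  act_bijective : ∀ a : B₂, Function.Bijective (act a)
  act_add : ∀ (a : B₂) (x y : B₁), act a (x + y) = act a x + act a y
  act_mul : ∀ (a : B₂) (x y : B₁), act a (x * y) = act a x * act a y
  act_hom : ∀ (a b : B₂) (x : B₁), act (a * b) x = act a (act b x)
  act_one : ∀ x : B₁, act (1 : B₂) x = x

variable {B₁ B₂ : Type*} [SkewLeftBrace B₁] [SkewLeftBrace B₂]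

theorem BraceActionHom.act_one' (α : BraceActionHom B₂ B₁) (a : B₂) :
    α.act a (1 : B₁) = 1 := by
  have h := α.act_mul a 1 1
  rw [mul_one] at h
  exact mul_eq_left.mp h.symm

/-- The underlying type of the semidirect product of two skew left braces. -/
@[ext]
structure SDP (B₁ B₂ : Type*) where
  fst : B₁
  snd : B₂

/-- The semidirect product `B₁ ⋊_α B₂` of skew left braces: the additive group is the
direct product, while `(a₁,a₂) ∘ (b₁,b₂) = (a₁ ∘ α_{a₂}(b₁), a₂ ∘ b₂)`. -/
def BraceActionHom.sdp (α : BraceActionHom B₂ B₁) : SkewLeftBrace (SDP B₁ B₂) :=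
  letI : Zero (SDP B₁ B₂) := ⟨⟨0, 0⟩⟩
  letI : Add (SDP B₁ B₂) := ⟨fun p q => ⟨p.fst + q.fst, p.snd + q.snd⟩⟩
  letI : Neg (SDP B₁ B₂) := ⟨fun p => ⟨-p.fst, -p.snd⟩⟩
  letI : One (SDP B₁ B₂) := ⟨⟨1, 1⟩⟩
  letI : Mul (SDP B₁ B₂) := ⟨fun p q => ⟨p.fst * α.act p.snd q.fst, p.snd * q.snd⟩⟩
  letI : Inv (SDP B₁ B₂) := ⟨fun p => ⟨α.act p.snd⁻¹ p.fst⁻¹, p.snd⁻¹⟩⟩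
  { add := (· + ·)
    zero := 0
    neg := (- ·)
    nsmul := nsmulRec
    zsmul := zsmulRec
    add_assoc := fun a b c =>
      SDP.ext (add_assoc a.fst b.fst c.fst) (add_assoc a.snd b.snd c.snd)
    zero_add := fun a => SDP.ext (zero_add a.fst) (zero_add a.snd)
    add_zero := fun a => SDP.ext (add_zero a.fst) (add_zero a.snd)
    neg_add_cancel := fun a => SDP.ext (neg_add_cancel a.fst) (neg_add_cancel a.snd)
    mul := (· * ·)
    one := 1
    inv := (·⁻¹)
    npow := npowRec
    zpow := zpowRec
    mul_assoc := fun a b c =>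
      SDP.ext
        (by show (a.fst * α.act a.snd b.fst) * α.act (a.snd * b.snd) c.fst =
              a.fst * α.act a.snd (b.fst * α.act b.snd c.fst)
            rw [α.act_hom, α.act_mul, mul_assoc])
        (mul_assoc a.snd b.snd c.snd)
    one_mul := fun a =>
      SDP.ext (by show (1 : B₁) * α.act 1 a.fst = a.fst; rw [α.act_one, one_mul])
        (one_mul a.snd)
    mul_one := fun a =>
      SDP.ext (by show a.fst * α.act a.snd (1 : B₁) = a.fst; rw [α.act_one', mul_one])
        (mul_one a.snd)
    inv_mul_cancel := fun a =>
      SDP.ext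
        (by show α.act a.snd⁻¹ a.fst⁻¹ * α.act a.snd⁻¹ a.fst = 1
            rw [← α.act_mul, inv_mul_cancel, α.act_one'])
        (inv_mul_cancel a.snd)
    mul_add_eq := fun a b c =>
      SDP.ext
        (by show a.fst * α.act a.snd (b.fst + c.fst) =
              a.fst * α.act a.snd b.fst + -a.fst + a.fst * α.act a.snd c.fst
            rw [α.act_add, SkewLeftBrace.mul_add_eq, sub_eq_add_neg])
        (by show a.snd * (b.snd + c.snd) = a.snd * b.snd + -a.snd + a.snd * c.snd
            rw [SkewLeftBrace.mul_add_eq, sub_eq_add_neg]) }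

end SkewLeftBrace

/-!
An ideal `I` of `B₁ ⋊_α B₂` gives the ideal `J = {x | (x, 0) ∈ I}` of `B₁` and the ideal
`K = snd(I)` of `B₂`, as preimage and image of `I` under brace homomorphisms. If `K = 0`
then `I = J × 0`. If `K = B₂`, pick `(g, a) ∈ I` with `a ≠ 0`: the commutator of `(h⁻¹, 0)`
with `(g, a)` is `(h⁻¹ ∘ g ∘ α_a(h) ∘ g⁻¹, 0) ∈ I`, so `J = 0` would force `α_a = i_g`.
Hence `J = B₁`, and then `I` is everything.
-/

namespace SkewLeftBrace

section Hom

variable {A C : Type*} [SkewLeftBrace A] [SkewLeftBrace C]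

structure IsBraceHom (f : A → C) : Prop where
  map_add : ∀ x y, f (x + y) = f x + f y
  map_mul : ∀ x y, f (x * y) = f x * f y

namespace IsBraceHom

variable {f : A → C}

theorem map_zero (hf : IsBraceHom f) : f 0 = 0 := (AddMonoidHom.mk' f hf.map_add).map_zero

theorem map_neg (hf : IsBraceHom f) (x : A) : f (-x) = -f x :=
  (AddMonoidHom.mk' f hf.map_add).map_neg x

theorem map_inv (hf : IsBraceHom f) (x : A) : f x⁻¹ = (f x)⁻¹ :=
  (MonoidHom.mk' f hf.map_mul).map_inv x

theorem map_lmap (hf : IsBraceHom f) (a x : A) : f (lmap a x) = lmap (f a) (f x) := by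
  simp only [lmap, hf.map_add, hf.map_mul, hf.map_neg]

end IsBraceHom

variable {f : A → C} {I : Set C}

theorem IsIdeal.preimage (hI : IsIdeal I) (hf : IsBraceHom f) : IsIdeal (f ⁻¹' I) where
  zero_mem := by rw [Set.mem_preimage, hf.map_zero]; exact hI.zero_mem
  add_mem x y hx hy := by rw [Set.mem_preimage, hf.map_add]; exact hI.add_mem hx hy
  neg_mem x hx := by rw [Set.mem_preimage, hf.map_neg]; exact hI.neg_mem hx
  add_conj_mem b x hx := by
    rw [Set.mem_preimage, hf.map_add, hf.map_add, hf.map_neg]; exact hI.add_conj_mem _ hx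
  mul_mem x y hx hy := by rw [Set.mem_preimage, hf.map_mul]; exact hI.mul_mem hx hy
  inv_mem x hx := by rw [Set.mem_preimage, hf.map_inv]; exact hI.inv_mem hx
  mul_conj_mem b x hx := by
    rw [Set.mem_preimage, hf.map_mul, hf.map_mul, hf.map_inv]; exact hI.mul_conj_mem _ hx
  lmap_mem a x hx := by rw [Set.mem_preimage, hf.map_lmap]; exact hI.lmap_mem _ hx

theorem IsIdeal.image {I : Set A} (hI : IsIdeal I) (hf : IsBraceHom f)
    (hsurj : Function.Surjective f) : IsIdeal (f '' I) where
  zero_mem := ⟨0, hI.zero_mem, hf.map_zero⟩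
  add_mem := by
    rintro _ _ ⟨x, hx, rfl⟩ ⟨y, hy, rfl⟩
    exact ⟨x + y, hI.add_mem hx hy, hf.map_add x y⟩
  neg_mem := by
    rintro _ ⟨x, hx, rfl⟩
    exact ⟨-x, hI.neg_mem hx, hf.map_neg x⟩
  add_conj_mem b := by
    rintro _ ⟨x, hx, rfl⟩
    obtain ⟨b, rfl⟩ := hsurj b
    exact ⟨b + x + -b, hI.add_conj_mem b hx, by rw [hf.map_add, hf.map_add, hf.map_neg]⟩
  mul_mem := by
    rintro _ _ ⟨x, hx, rfl⟩ ⟨y, hy, rfl⟩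
    exact ⟨x * y, hI.mul_mem hx hy, hf.map_mul x y⟩
  inv_mem := by
    rintro _ ⟨x, hx, rfl⟩
    exact ⟨x⁻¹, hI.inv_mem hx, hf.map_inv x⟩
  mul_conj_mem b := by
    rintro _ ⟨x, hx, rfl⟩
    obtain ⟨b, rfl⟩ := hsurj b
    exact ⟨b * x * b⁻¹, hI.mul_conj_mem b hx, by rw [hf.map_mul, hf.map_mul, hf.map_inv]⟩
  lmap_mem a := by
    rintro _ ⟨x, hx, rfl⟩
    obtain ⟨a, rfl⟩ := hsurj a
    exact ⟨lmap a x, hI.lmap_mem a hx, hf.map_lmap a x⟩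

end Hom

section Inl

variable {B₁ B₂ : Type*} [Zero B₂]

def SDP.inl (x : B₁) : SDP B₁ B₂ := ⟨x, 0⟩

theorem SDP.eq_of_image_snd_subset_zero {I : Set (SDP B₁ B₂)} (hI : SDP.snd '' I ⊆ {0}) :
    I = {p | p.fst ∈ SDP.inl ⁻¹' I ∧ p.snd = 0} := by
  ext ⟨x, a⟩
  constructor
  · intro hp
    obtain rfl : a = 0 := hI ⟨_, hp, rfl⟩
    exact ⟨hp, rfl⟩
  · rintro ⟨hx, rfl : a = 0⟩
    exact hx

end Inl

variable {B₁ B₂ : Type*} [SkewLeftBrace B₁] [SkewLeftBrace B₂]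

namespace BraceActionHom

variable (α : BraceActionHom B₂ B₁)

theorem act_zero (x : B₁) : α.act 0 x = x := by rw [zero_eq_one, α.act_one]

theorem act_act_inv (a : B₂) (x : B₁) : α.act a (α.act a⁻¹ x) = x := by
  rw [← α.act_hom, mul_inv_cancel, α.act_one]

theorem isBraceHom_inl : @IsBraceHom B₁ (SDP B₁ B₂) _ α.sdp SDP.inl := by
  let _ := α.sdp
  constructor
  · intro x y
    exact SDP.ext rfl (add_zero 0).symm
  · intro x y
    exact SDP.ext (by show x * y = x * α.act 0 y; rw [act_zero]) (mul_zero' 0).symm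

theorem isBraceHom_snd : @IsBraceHom (SDP B₁ B₂) B₂ α.sdp _ SDP.snd :=
  @IsBraceHom.mk _ _ α.sdp _ _ (fun _ _ => rfl) (fun _ _ => rfl)

end BraceActionHom

variable {α : BraceActionHom B₂ B₁} {I : Set (SDP B₁ B₂)}

theorem IsIdeal.inv_mul_conj_act_mem_preimage_inl (hI : @IsIdeal _ α.sdp I) {g : B₁} {a : B₂}
    (hga : SDP.mk g a ∈ I) (h : B₁) : h⁻¹ * (g * α.act a h * g⁻¹) ∈ SDP.inl ⁻¹' I := by
  let _ := α.sdp
  have hcomm : SDP.inl h⁻¹ * SDP.mk g a * (SDP.inl h⁻¹)⁻¹ * (SDP.mk g a)⁻¹ ∈ I :=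
    hI.mul_mem (hI.mul_conj_mem _ hga) (hI.inv_mem hga)
  show SDP.inl _ ∈ I
  convert hcomm using 1
  refine SDP.ext ?_ ?_
  · show h⁻¹ * (g * α.act a h * g⁻¹) = h⁻¹ * α.act 0 g * α.act (0 * a) (α.act (0 : B₂)⁻¹ h⁻¹⁻¹) *
      α.act (0 * a * (0 : B₂)⁻¹) (α.act a⁻¹ g⁻¹)
    simp only [zero_eq_one, one_mul, inv_one, mul_one, α.act_one, inv_inv, α.act_act_inv, mul_assoc]
  · show (0 : B₂) = 0 * a * (0 : B₂)⁻¹ * a⁻¹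
    rw [zero_eq_one, one_mul, inv_one, mul_one, mul_inv_cancel]

theorem IsIdeal.act_eq_conj_of_preimage_inl_eq_zero (hI : @IsIdeal _ α.sdp I)
    (hJ : SDP.inl ⁻¹' I = {0}) {g : B₁} {a : B₂} (hga : SDP.mk g a ∈ I) :
    α.act a = fun h => g⁻¹ * h * g := by
  funext h
  have hh := hI.inv_mul_conj_act_mem_preimage_inl hga h
  rw [hJ, Set.mem_singleton_iff, zero_eq_one, inv_mul_eq_one] at hh
  conv_rhs => rw [hh]
  group

theorem IsIdeal.eq_univ_of_preimage_inl_eq_univ (hI : @IsIdeal _ α.sdp I)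
    (hJ : SDP.inl ⁻¹' I = Set.univ) (hK : SDP.snd '' I = Set.univ) : I = Set.univ := by
  let _ := α.sdp
  refine Set.eq_univ_of_forall fun ⟨x, a⟩ => ?_
  obtain ⟨⟨g, a⟩, hga, rfl⟩ := hK ▸ Set.mem_univ a
  have hx : x - g ∈ SDP.inl ⁻¹' I := hJ ▸ Set.mem_univ _
  convert hI.add_mem hx hga using 1
  exact SDP.ext (sub_add_cancel x g).symm (zero_add a).symm

end SkewLeftBrace

open SkewLeftBrace

theorem ideals_of_sdp_of_outer_general {B₁ B₂ : Type*} [SkewLeftBrace B₁] [SkewLeftBrace B₂]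
    (h₁ : SkewLeftBrace.Simple B₁) (h₂ : SkewLeftBrace.Simple B₂)
    (α : BraceActionHom B₂ B₁)
    (houter : ∀ a : B₂, a ≠ 0 → ∀ g : B₁, α.act a ≠ fun h => g⁻¹ * h * g) :
    ∀ I : Set (SDP B₁ B₂), @IsIdeal _ α.sdp I →
      I = {SDP.mk 0 0} ∨ I = {p : SDP B₁ B₂ | p.snd = 0} ∨ I = Set.univ := by
  intro I hI
  let _ := α.sdp
  have hJ := hI.preimage α.isBraceHom_inl
  rcases h₂.2 _ (hI.image α.isBraceHom_snd fun a => ⟨⟨0, a⟩, rfl⟩) with hK | hK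
  · rw [SDP.eq_of_image_snd_subset_zero hK.subset]
    rcases h₁.2 _ hJ with hJ0 | hJ1
    · left
      ext ⟨x, a⟩
      simp [hJ0]
    · right; left
      simp [hJ1]
  · right; right
    refine hI.eq_univ_of_preimage_inl_eq_univ ((h₁.2 _ hJ).resolve_left fun hJ0 => ?_) hK
    obtain ⟨a, ha⟩ := (Set.ne_univ_iff_exists_notMem _).1 h₂.1
    obtain ⟨⟨g, a⟩, hga, rfl⟩ := hK ▸ Set.mem_univ a
    exact houter _ ha g (hI.act_eq_conj_of_preimage_inl_eq_zero hJ0 hga)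

/-- If `B₁`, `B₂` are simple, `α` is non-trivial, and no `α_a` (for `a ≠ 0`) is an
inner automorphism of `(B₁,∘)`, then the only ideals of `B₁ ⋊_α B₂` are `{0}`,
`B₁ × {0}` and the whole brace. -/
theorem ideals_of_sdp_of_outer {B₁ B₂ : Type*} [SkewLeftBrace B₁] [SkewLeftBrace B₂]
    (h₁ : SkewLeftBrace.Simple B₁) (h₂ : SkewLeftBrace.Simple B₂)
    (α : BraceActionHom B₂ B₁)
    (hα : ∃ (a : B₂) (x : B₁), α.act a x ≠ x)
    (houter : ∀ a : B₂, a ≠ 0 → ∀ g : B₁, α.act a ≠ fun h => g⁻¹ * h * g) :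
    ∀ I : Set (SDP B₁ B₂), @IsIdeal _ α.sdp I →
      I = {SDP.mk 0 0} ∨ I = {p : SDP B₁ B₂ | p.snd = 0} ∨ I = Set.univ :=
  ideals_of_sdp_of_outer_general h₁ h₂ α houter
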